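/- For real Δ > 0, Γ ≥ 0, ξ > 0, and s = ⌊Γ/(Δξ)⌋, the approximation error |log₂(Δ+Γ) − (1/ln 2)(ln(Δ + Δsξ) + (Γ − sΔξ)/(Δ(1+sξ)))| is at most (1/ln 2)·ξ²/2, i.e., the linearization of the logarithm at Δ(1+sξ) has error bounded by ξ²/(2 ln 2). -/

import Mathlib

/-! Writing `Δ + Γ = a + r` with `a = Δ (1 + s ξ)` and `r = Γ - s Δ ξ`, the error is
`|log (1 + u) - u| / log 2` for `u = r / a`, and `0 ≤ u < ξ` because `0 ≤ r < Δ ξ ≤ ξ a`.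
The claim is then the second-order bound `|log (1 + u) - u| ≤ u² / 2` for `u ≥ 0`. -/

open Real

lemma hasDerivAt_log_one_add_sub_add_sq_div_two {x : ℝ} (hx : -1 < x) :
    HasDerivAt (fun y => log (1 + y) - y + y ^ 2 / 2) (x ^ 2 / (1 + x)) x := by
  have h1x : 1 + x ≠ 0 := by linarith
  refine ((((hasDerivAt_id' x).const_add 1).log h1x).sub (hasDerivAt_id' x)).add
    ((hasDerivAt_pow 2 x).div_const 2) |>.congr_deriv ?_
  field_simp
  ring

lemma sub_sq_div_two_le_log_one_add {u : ℝ} (hu : 0 ≤ u) : u - u ^ 2 / 2 ≤ log (1 + u) := by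
  have hmono : MonotoneOn (fun y => log (1 + y) - y + y ^ 2 / 2) (Set.Ici 0) := by
    refine monotoneOn_of_hasDerivWithinAt_nonneg (f' := fun x => x ^ 2 / (1 + x)) (convex_Ici 0)
      (fun x hx => (hasDerivAt_log_one_add_sub_add_sq_div_two
        (by linarith [Set.mem_Ici.1 hx])).continuousAt.continuousWithinAt)
      (fun x hx => ?_) (fun x hx => ?_) <;> rw [interior_Ici, Set.mem_Ioi] at hx
    · exact (hasDerivAt_log_one_add_sub_add_sq_div_two (by linarith)).hasDerivWithinAt
    · exact div_nonneg (sq_nonneg x) (by linarith)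
  have := hmono Set.self_mem_Ici (Set.mem_Ici.2 hu) hu
  norm_num at this
  linarith

lemma abs_log_one_add_sub_le {u : ℝ} (hu : 0 ≤ u) : |log (1 + u) - u| ≤ u ^ 2 / 2 :=
  abs_le.2 ⟨by linarith [sub_sq_div_two_le_log_one_add hu],
    by linarith [log_le_sub_one_of_pos (by linarith : (0 : ℝ) < 1 + u), sq_nonneg u]⟩

lemma abs_log_add_sub_log_add_div_le {a r : ℝ} (ha : 0 < a) (hr : 0 ≤ r) :
    |log (a + r) - (log a + r / a)| ≤ (r / a) ^ 2 / 2 := by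
  have hu : 0 ≤ r / a := div_nonneg hr ha.le
  rw [show a + r = a * (1 + r / a) by field_simp, log_mul ha.ne' (by positivity),
    add_sub_add_left_eq_sub]
  exact abs_log_one_add_sub_le hu

theorem stmt_2 (Δ Γ ξ : ℝ) (hΔ : 0 < Δ) (hΓ : 0 ≤ Γ) (hξ : 0 < ξ)
    (s : ℤ) (hs : s = ⌊Γ / (Δ * ξ)⌋) :
    |logb 2 (Δ + Γ) -
      (1 / Real.log 2) * (Real.log (Δ + Δ * s * ξ) + (Γ - s * Δ * ξ) / (Δ * (1 + s * ξ)))| ≤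
      (1 / Real.log 2) * ξ ^ 2 / 2 := by
  have hΔξ : 0 < Δ * ξ := mul_pos hΔ hξ
  have hs0 : (0 : ℝ) ≤ s := by
    exact_mod_cast hs ▸ Int.floor_nonneg.2 (div_nonneg hΓ hΔξ.le)
  have hr0 : 0 ≤ Γ - s * Δ * ξ := by
    simpa [hs, mul_assoc] using Int.sub_floor_div_mul_nonneg Γ hΔξ
  have hrlt : Γ - s * Δ * ξ < Δ * ξ := by
    simpa [hs, mul_assoc] using Int.sub_floor_div_mul_lt Γ hΔξ
  have hΔa : Δ ≤ Δ * (1 + s * ξ) := le_mul_of_one_le_right hΔ.le (by nlinarith)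
  have ha : 0 < Δ * (1 + s * ξ) := hΔ.trans_le hΔa
  have hu : (Γ - s * Δ * ξ) / (Δ * (1 + s * ξ)) ≤ ξ :=
    calc _ ≤ (Γ - s * Δ * ξ) / Δ := div_le_div_of_nonneg_left hr0 hΔ hΔa
      _ ≤ ξ := (div_le_iff₀ hΔ).2 (by linarith)
  have hlin := abs_log_add_sub_log_add_div_le ha hr0
  rw [show Δ * (1 + s * ξ) + (Γ - s * Δ * ξ) = Δ + Γ by ring] at hlin
  rw [show Δ + Δ * s * ξ = Δ * (1 + s * ξ) by ring, logb, ← one_div_mul_eq_div, ← mul_sub,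
    abs_mul, abs_of_pos (one_div_pos.2 (log_pos one_lt_two)), mul_div_assoc]
  gcongr
  exact hlin.trans (by gcongr)
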